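/- Let K, n be positive integers, and for each a = 1,…,K let m^{(a)} ∈ ℤ^n and ε(m^{(a)}) ∈ ℤ. Suppose the Diophantine conditions hold: ∑_a ε(m^{(a)}) m_i^{(a)} m_j^{(a)} m_k^{(a)} = 0, ∑_a ε(m^{(a)}) m_i^{(a)} m_j^{(a)} = 0, and ∑_a ε(m^{(a)}) m_i^{(a)} = 0 for all 1 ≤ i,j,k ≤ n. Then for each i, the function h_i(x;q;p) = ∏_{a=1}^K θ_p(x^{m^{(a)}}; q)_{m_i^{(a)}}^{ε(m^{(a)})} (where x^{m^{(a)}} = ∏_l x_l^{m_l^{(a)}}) satisfies h_i(x_1,…,px_j,…,x_n;q;p) = h_i(x;q;p) for every j. -/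

import Mathlib

open scoped BigOperators

/-- The infinite q-Pochhammer symbol `(x;q)_∞ = ∏_{j≥0} (1 - x q^j)`. -/
noncomputable def pochInf (x q : ℂ) : ℂ := ∏' j : ℕ, (1 - x * q ^ j)

/-- The theta function `θ_p(x) = (x;p)_∞ (p/x;p)_∞`. -/
noncomputable def theta (p x : ℂ) : ℂ := pochInf x p * pochInf (p / x) p

/-- The elliptic shifted factorial `θ_p(x;q)_n` for `n ∈ ℤ`. -/
noncomputable def thetaPoch (p q x : ℂ) : ℤ → ℂ
  | Int.ofNat n => ∏ j ∈ Finset.range n, theta p (x * q ^ j)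
  | Int.negSucc n => (∏ j ∈ Finset.range (n + 1), theta p (x * q ^ (-(j + 1 : ℤ))))⁻¹

/-!
The theta function is quasi-periodic, `θ_p(p x) = -x⁻¹ θ_p(x)`, hence
`θ_p(p^μ x) = (-x⁻¹)^μ p^(-μ(μ-1)/2) θ_p(x)`, and the elliptic shifted factorial
`θ_p(x;q)_k` picks up the factor `(-x⁻¹)^(μk) q^(-μ k(k-1)/2) p^(-k μ(μ-1)/2)` when `x` is
replaced by `p^μ x`. Multiplying `x_j` by `p` replaces the monomial `x^{m^{(a)}}` by
`p^{m_j^{(a)}} x^{m^{(a)}}`, so `h_i` changes by the product over `a` of these factors raised to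
`ε(m^{(a)})`. The exponents of `-1`, of each `x_l`, of `q` and of `p` in that product are sums
`∑_a ε(m^{(a)}) P(m^{(a)})` with `P` a quadratic or cubic monomial, or a combination of such,
and they all vanish by the Diophantine conditions.
-/

open Finset

lemma prod_zpow_eq_zpow_sum {ι M : Type*} [CommGroupWithZero M] (s : Finset ι) (f : ι → ℤ)
    {c : M} (hc : c ≠ 0) : ∏ a ∈ s, c ^ f a = c ^ ∑ a ∈ s, f a := by
  classical
  induction s using Finset.induction_on with
  | empty => simp
  | insert a s ha ih => rw [prod_insert ha, sum_insert ha, ih, zpow_add₀ hc]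

lemma eq_of_zero_of_mul_succ {M : Type*} [GroupWithZero M] {f g c : ℤ → M}
    (hc : ∀ μ, c μ ≠ 0) (h0 : f 0 = g 0)
    (hf : ∀ μ, f (μ + 1) = c μ * f μ) (hg : ∀ μ, g (μ + 1) = c μ * g μ) : f = g := by
  funext μ
  induction μ using Int.induction_on with
  | zero => exact h0
  | succ n ih => rw [hf, hg, ih]
  | pred n ih =>
    have hf' := hf (-n - 1); have hg' := hg (-n - 1)
    rw [sub_add_cancel] at hf' hg'
    exact mul_left_cancel₀ (hc _) (hf'.symm.trans (ih.trans hg'))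

lemma prod_update_mul_zpow {ι M : Type*} [Fintype ι] [DecidableEq ι] [DivisionCommMonoid M]
    (x : ι → M) (j : ι) (c : M) (e : ι → ℤ) :
    ∏ l, Function.update x j (c * x j) l ^ e l = c ^ e j * ∏ l, x l ^ e l := by
  rw [← mul_prod_erase univ _ (mem_univ j),
    ← mul_prod_erase univ (fun l => x l ^ e l) (mem_univ j), Function.update_self, mul_zpow,
    mul_assoc]
  congr 2
  exact prod_congr rfl fun l hl => by rw [Function.update_of_ne (ne_of_mem_erase hl)]

lemma neg_inv_prod_zpow_zpow {ι M : Type*} [Fintype ι] [DivisionCommMonoid M] [HasDistribNeg M]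
    (x : ι → M) (m : ι → ℤ) (e : ℤ) :
    (-(∏ l, x l ^ m l)⁻¹) ^ e = (-1) ^ e * ∏ l, x l ^ (-(m l * e)) := by
  rw [neg_eq_neg_one_mul, mul_zpow, ← prod_inv_distrib, ← prod_zpow]
  simp only [← zpow_neg, ← zpow_mul, neg_mul]

def choose2 (μ : ℤ) : ℤ := μ * (μ - 1) / 2

lemma two_mul_choose2 (μ : ℤ) : 2 * choose2 μ = μ * (μ - 1) :=
  Int.mul_ediv_cancel' (Int.even_mul_pred_self μ).two_dvd

lemma choose2_add_one (μ : ℤ) : choose2 (μ + 1) = choose2 μ + μ := by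
  have := two_mul_choose2 μ; have := two_mul_choose2 (μ + 1); linarith

lemma choose2_neg (μ : ℤ) : choose2 (-μ) = choose2 (μ + 1) := by
  have := two_mul_choose2 (-μ); have := two_mul_choose2 (μ + 1); linarith

lemma sum_range_intCast_eq_choose2 (N : ℕ) : ∑ j ∈ range N, (j : ℤ) = choose2 N := by
  induction N with
  | zero => simp [choose2]
  | succ N ih => rw [sum_range_succ, ih, Nat.cast_succ, choose2_add_one]

lemma sum_range_neg_add_one_eq_neg_choose2 (N : ℕ) :
    ∑ j ∈ range N, -((j : ℤ) + 1) = -choose2 (-N) := by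
  rw [sum_neg_distrib, sum_add_distrib, sum_range_intCast_eq_choose2, choose2_neg, choose2_add_one]
  simp

lemma sum_mul_choose2_eq_zero {ι : Type*} (s : Finset ι) (w v : ι → ℤ)
    (h1 : ∑ a ∈ s, w a * v a = 0) (h2 : ∑ a ∈ s, w a * v a * v a = 0) :
    ∑ a ∈ s, w a * choose2 (v a) = 0 := by
  have h : 2 * ∑ a ∈ s, w a * choose2 (v a)
      = ∑ a ∈ s, w a * v a * v a - ∑ a ∈ s, w a * v a := by
    rw [mul_sum, ← sum_sub_distrib]
    exact sum_congr rfl fun a _ => by linear_combination w a * two_mul_choose2 (v a)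
  omega

lemma multipliable_one_sub_mul_pow (x : ℂ) {p : ℂ} (hp : ‖p‖ < 1) :
    Multipliable fun n : ℕ => 1 - x * p ^ n := by
  simpa [sub_eq_add_neg] using multipliable_one_add_of_summable (f := fun n : ℕ => -(x * p ^ n))
    (by simpa using (summable_geometric_of_lt_one (norm_nonneg p) hp).mul_left ‖x‖)

lemma pochInf_eq_one_sub_mul (x : ℂ) {p : ℂ} (hp : ‖p‖ < 1) :
    pochInf x p = (1 - x) * pochInf (x * p) p := by
  have hm : Multipliable fun n : ℕ => 1 - x * p ^ (n + 1) :=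
    (multipliable_one_sub_mul_pow (x * p) hp).congr fun n => by ring
  rw [pochInf, tprod_eq_zero_mul' (f := fun n : ℕ => 1 - x * p ^ n) hm, pochInf, pow_zero,
    mul_one]
  congr 1
  exact tprod_congr fun n => by ring

lemma theta_self_mul {p : ℂ} (hp : ‖p‖ < 1) (hp0 : p ≠ 0) {x : ℂ} (hx : x ≠ 0) :
    theta p (p * x) = -x⁻¹ * theta p x := by
  have hinv : pochInf x⁻¹ p = (1 - x⁻¹) * pochInf (p / x) p := by
    rw [pochInf_eq_one_sub_mul _ hp, inv_mul_eq_div]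
  have hdiv : p / (p * x) = x⁻¹ := by field_simp
  -- both sides are now `1 - x^(±1)` times `(p x; p)_∞ (p / x; p)_∞`
  rw [theta, theta, hdiv, hinv, pochInf_eq_one_sub_mul x hp, mul_comm x p]
  field_simp
  ring

lemma theta_zpow_mul {p : ℂ} (hp : ‖p‖ < 1) (hp0 : p ≠ 0) {x : ℂ} (hx : x ≠ 0)
    (μ : ℤ) :
    theta p (p ^ μ * x) = (-x⁻¹) ^ μ * p ^ (-choose2 μ) * theta p x := by
  revert μ
  refine congrFun (eq_of_zero_of_mul_succ (c := fun μ => -(p ^ μ * x)⁻¹)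
    (fun μ => by simp [zpow_ne_zero μ hp0, hx]) (by simp [choose2]) (fun μ => ?_) (fun μ => ?_))
  · rw [zpow_add_one₀ hp0, mul_comm _ p, mul_assoc,
      theta_self_mul hp hp0 (mul_ne_zero (zpow_ne_zero _ hp0) hx)]
  · rw [choose2_add_one, zpow_add_one₀ (by simpa using hx), neg_add, zpow_add₀ hp0,
      zpow_neg p μ]
    field_simp

section

variable {p q : ℂ} (hp : ‖p‖ < 1) (hp0 : p ≠ 0) (hq0 : q ≠ 0) {x : ℂ} (hx : x ≠ 0)
include hp hp0 hq0 hx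

lemma prod_theta_zpow_mul {ι : Type*} (s : Finset ι) (c : ι → ℤ) (μ : ℤ) :
    ∏ j ∈ s, theta p (p ^ μ * (x * q ^ c j))
      = (-x⁻¹) ^ (μ * #s) * q ^ (-(μ * ∑ j ∈ s, c j)) * p ^ (-(#s * choose2 μ))
        * ∏ j ∈ s, theta p (x * q ^ c j) := by
  have hfactor : ∀ j, theta p (p ^ μ * (x * q ^ c j))
      = ((-x⁻¹) ^ μ * p ^ (-choose2 μ)) * q ^ (-(μ * c j)) * theta p (x * q ^ c j) := by
    intro j
    rw [theta_zpow_mul hp hp0 (mul_ne_zero hx (zpow_ne_zero _ hq0)), mul_inv, neg_mul_eq_neg_mul,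
      mul_zpow, inv_zpow', ← zpow_mul]
    ring_nf
  rw [prod_congr rfl fun j _ => hfactor j, prod_mul_distrib, prod_mul_distrib, prod_const,
    prod_zpow_eq_zpow_sum _ _ hq0, mul_pow, ← zpow_natCast, ← zpow_natCast, ← zpow_mul,
    ← zpow_mul, sum_neg_distrib, ← mul_sum]
  ring_nf

lemma thetaPoch_zpow_mul (μ k : ℤ) :
    thetaPoch p q (p ^ μ * x) k
      = (-x⁻¹) ^ (μ * k) * q ^ (-(μ * choose2 k)) * p ^ (-(k * choose2 μ))
        * thetaPoch p q x k := by
  cases k with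
  | ofNat N =>
    have h := prod_theta_zpow_mul hp hp0 hq0 hx (range N) (fun j => (j : ℤ)) μ
    simp only [zpow_natCast, card_range, sum_range_intCast_eq_choose2] at h
    simpa only [thetaPoch, Int.ofNat_eq_natCast, mul_assoc] using h
  | negSucc N =>
    have h := prod_theta_zpow_mul hp hp0 hq0 hx (range (N + 1)) (fun j => -((j : ℤ) + 1)) μ
    simp only [card_range, sum_range_neg_add_one_eq_neg_choose2] at h
    simp only [thetaPoch, mul_assoc] at h ⊢
    rw [h, Int.negSucc_eq]
    simp only [mul_inv, ← zpow_neg]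
    push_cast
    ring_nf

end

lemma prod_thetaPoch_multiplier_zpow_eq_one {ι κ : Type*} [Fintype ι] [Fintype κ] {p q : ℂ}
    (hp0 : p ≠ 0) (hq0 : q ≠ 0) {x : κ → ℂ} (hx : ∀ l, x l ≠ 0) (m : ι → κ → ℤ)
    (ε : ι → ℤ)
    (h3 : ∀ i j k, ∑ a, ε a * m a i * m a j * m a k = 0)
    (h2 : ∀ i j, ∑ a, ε a * m a i * m a j = 0) (i j : κ) :
    ∏ a, ((-(∏ l, x l ^ m a l)⁻¹) ^ (m a j * m a i) * q ^ (-(m a j * choose2 (m a i)))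
      * p ^ (-(m a i * choose2 (m a j)))) ^ ε a = 1 := by
  simp only [neg_inv_prod_zpow_zpow, mul_zpow, ← prod_zpow, ← zpow_mul, prod_mul_distrib]
  rw [prod_comm]
  simp only [prod_zpow_eq_zpow_sum _ _ hp0, prod_zpow_eq_zpow_sum _ _ hq0,
    prod_zpow_eq_zpow_sum _ _ (hx _), prod_zpow_eq_zpow_sum _ _ (by norm_num : (-1 : ℂ) ≠ 0)]
  have sign_exp : ∑ a, m a j * m a i * ε a = 0 := by
    rw [← h2 i j]; exact sum_congr rfl fun a _ => by ring
  have x_exp : ∀ l, ∑ a, -(m a l * (m a j * m a i)) * ε a = 0 := fun l => by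
    rw [← neg_zero, ← h3 i j l, ← sum_neg_distrib]; exact sum_congr rfl fun a _ => by ring
  have q_exp : ∑ a, -(m a j * choose2 (m a i)) * ε a = 0 := by
    rw [← neg_zero, ← sum_mul_choose2_eq_zero univ (fun a => ε a * m a j) (fun a => m a i)
      (h2 j i) (h3 j i i), ← sum_neg_distrib]
    exact sum_congr rfl fun a _ => by ring
  have p_exp : ∑ a, -(m a i * choose2 (m a j)) * ε a = 0 := by
    rw [← neg_zero, ← sum_mul_choose2_eq_zero univ (fun a => ε a * m a i) (fun a => m a j)
      (h2 i j) (h3 i j j), ← sum_neg_distrib]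
    exact sum_congr rfl fun a _ => by ring
  simp only [sign_exp, x_exp, q_exp, p_exp, zpow_zero, prod_const_one, mul_one]

theorem certificate_elliptic_in_x_general (K n : ℕ)
    (m : Fin K → Fin n → ℤ) (ε : Fin K → ℤ)
    (p q : ℂ) (hp : ‖p‖ < 1) (hp0 : p ≠ 0) (hq0 : q ≠ 0)
    (x : Fin n → ℂ) (hx : ∀ l, x l ≠ 0)
    (h3 : ∀ i j k : Fin n, ∑ a, ε a * m a i * m a j * m a k = 0)
    (h2 : ∀ i j : Fin n, ∑ a, ε a * m a i * m a j = 0) :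
    ∀ i j : Fin n,
      (∏ a, thetaPoch p q (∏ l, (Function.update x j (p * x j)) l ^ m a l) (m a i) ^ ε a)
        = ∏ a, thetaPoch p q (∏ l, x l ^ m a l) (m a i) ^ ε a := by
  intro i j
  have hX : ∀ a, ∏ l, x l ^ m a l ≠ 0 := fun a =>
    prod_ne_zero_iff.2 fun l _ => zpow_ne_zero _ (hx l)
  simp only [prod_update_mul_zpow, thetaPoch_zpow_mul hp hp0 hq0 (hX _),
    mul_zpow _ (thetaPoch p q _ _)]
  rw [prod_mul_distrib, prod_thetaPoch_multiplier_zpow_eq_one hp0 hq0 hx m ε h3 h2 i j, one_mul]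

theorem certificate_elliptic_in_x (K n : ℕ) (hK : 0 < K) (hn : 0 < n)
    (m : Fin K → Fin n → ℤ) (ε : Fin K → ℤ)
    (p q : ℂ) (hp : ‖p‖ < 1) (hp0 : p ≠ 0) (hq0 : q ≠ 0)
    (x : Fin n → ℂ) (hx : ∀ l, x l ≠ 0)
    (hreg : ∀ (a : Fin K) (k s : ℤ),
      theta p ((∏ l, x l ^ m a l) * q ^ k * p ^ s) ≠ 0)
    (h3 : ∀ i j k : Fin n, ∑ a, ε a * m a i * m a j * m a k = 0)
    (h2 : ∀ i j : Fin n, ∑ a, ε a * m a i * m a j = 0)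
    (h1 : ∀ i : Fin n, ∑ a, ε a * m a i = 0) :
    ∀ i j : Fin n,
      (∏ a, thetaPoch p q (∏ l, (Function.update x j (p * x j)) l ^ m a l) (m a i) ^ ε a)
        = ∏ a, thetaPoch p q (∏ l, x l ^ m a l) (m a i) ^ ε a :=
  certificate_elliptic_in_x_general K n m ε p q hp hp0 hq0 x hx h3 h2
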